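/- arXiv:1606.03965 — 2 statements merged into one kernel-verified Lean document; each statement's English description precedes it below -/
import Mathlib

section
/- Let (y_n)_{n∈ℕ} be a nonnegative real sequence satisfying y_{n+1} ≤ c·bⁿ·y_n^{1+ε} for all n ≥ 0, where c > 0, ε > 0 and b ≥ 1. Then for all n, y_n ≤ c^{((1+ε)ⁿ−1)/ε} · b^{((1+ε)ⁿ−1)/ε² − n/ε} · y_0^{(1+ε)ⁿ}. -/
/-! The right-hand side solves the recursion with equality, `M (n + 1) = c bⁿ M n ^ (1 + ε)`,
with `M 0 = y 0`; since `x ↦ c bⁿ x ^ (1 + ε)` is monotone on `[0, ∞)`, induction gives `y n ≤ M n`. -/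

open Set

theorem le_of_le_recurrence {α : Type*} [Preorder α] {s : Set α} {f : ℕ → α → α} {y z : ℕ → α}
    (hf : ∀ n, MonotoneOn (f n) s) (hys : ∀ n, y n ∈ s) (hzs : ∀ n, z n ∈ s)
    (hy : ∀ n, y (n + 1) ≤ f n (y n)) (hz : ∀ n, z (n + 1) = f n (z n)) (h₀ : y 0 ≤ z 0) :
    ∀ n, y n ≤ z n
  | 0 => h₀
  | n + 1 => (hy n).trans <|
      (hf n (hys n) (hzs n) (le_of_le_recurrence hf hys hzs hy hz h₀ n)).trans_eq (hz n).symm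

noncomputable def deGiorgiBound (c b ε y₀ : ℝ) (n : ℕ) : ℝ :=
  c ^ (((1 + ε) ^ n - 1) / ε) * b ^ (((1 + ε) ^ n - 1) / ε ^ 2 - n / ε) * y₀ ^ ((1 + ε) ^ n)

section deGiorgiBound

variable {c b ε y₀ : ℝ}

theorem deGiorgiBound_zero : deGiorgiBound c b ε y₀ 0 = y₀ := by
  simp [deGiorgiBound]

theorem deGiorgiBound_nonneg (hc : 0 ≤ c) (hb : 0 ≤ b) (hy₀ : 0 ≤ y₀) (n : ℕ) :
    0 ≤ deGiorgiBound c b ε y₀ n := by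
  unfold deGiorgiBound
  positivity

theorem deGiorgiBound_succ (hc : 0 < c) (hb : 0 < b) (hε : ε ≠ 0) (hy₀ : 0 ≤ y₀) (n : ℕ) :
    deGiorgiBound c b ε y₀ (n + 1) = c * b ^ n * deGiorgiBound c b ε y₀ n ^ (1 + ε) := by
  have hc_exp : 1 + ((1 + ε) ^ n - 1) / ε * (1 + ε) = ((1 + ε) ^ (n + 1) - 1) / ε := by
    field_simp
    ring
  have hb_exp : (n : ℝ) + (((1 + ε) ^ n - 1) / ε ^ 2 - n / ε) * (1 + ε)
      = ((1 + ε) ^ (n + 1) - 1) / ε ^ 2 - (n + 1 : ℕ) / ε := by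
    push_cast
    field_simp
    ring
  unfold deGiorgiBound
  rw [Real.mul_rpow (by positivity) (by positivity), Real.mul_rpow (by positivity) (by positivity),
    ← Real.rpow_mul hc.le, ← Real.rpow_mul hb.le, ← Real.rpow_mul hy₀, ← pow_succ,
    ← hc_exp, ← hb_exp, Real.rpow_add hc, Real.rpow_add hb, Real.rpow_one, Real.rpow_natCast]
  ring

end deGiorgiBound

theorem stmt_8 (y : ℕ → ℝ) (c b ε : ℝ) (hc : 0 < c) (hε : 0 < ε) (hb : 1 ≤ b)
    (hy : ∀ n, 0 ≤ y n) (hrec : ∀ n, y (n + 1) ≤ c * b ^ n * y n ^ (1 + ε)) :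
    ∀ n, y n ≤ c ^ (((1 + ε) ^ n - 1) / ε)
        * b ^ (((1 + ε) ^ n - 1) / ε ^ 2 - n / ε)
        * y 0 ^ ((1 + ε) ^ n) := by
  have hb₀ : 0 < b := one_pos.trans_le hb
  have hmono (n : ℕ) : MonotoneOn (fun x : ℝ => c * b ^ n * x ^ (1 + ε)) (Ici 0) :=
    fun _ hx _ _ hxy =>
      mul_le_mul_of_nonneg_left (Real.rpow_le_rpow hx hxy (by linarith)) (by positivity)
  exact le_of_le_recurrence hmono hy (deGiorgiBound_nonneg hc.le hb₀.le (hy 0)) hrec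
    (deGiorgiBound_succ hc hb₀ hε.ne' (hy 0)) deGiorgiBound_zero.ge
end

section
/- Let μ > 0, a ∈ ℝ, and let (ρ, u) be a smooth solution of the isothermal Korteweg system ∂_t ρ + div(ρu) = 0, ∂_t(ρu) + div(ρu⊗u) − 2μ div(ρ Du) + a∇ρ = μ² div(ρ∇∇ log ρ) on (0,T)×ℝᴺ with ρ > 0. Then the effective velocity v := u + μ∇ log ρ satisfies ∂_t ρ + div(ρv) − μΔρ = 0 and ρ∂_t v + ρ u·∇v − μ div(ρ∇v) + a∇ρ = 0. -/
/-- Spatial partial derivative in direction `i` of a scalar function on `Fin n → ℝ`. -/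
noncomputable def pd {n : ℕ} (i : Fin n) (f : (Fin n → ℝ) → ℝ) (x : Fin n → ℝ) : ℝ :=
  fderiv ℝ f x (Pi.single i 1)

/-- Time derivative of a time-dependent scalar field. -/
noncomputable def pt {n : ℕ} (f : ℝ → (Fin n → ℝ) → ℝ) (t : ℝ) (x : Fin n → ℝ) : ℝ :=
  deriv (fun s => f s x) t

/-- Spatial Laplacian. -/
noncomputable def lap {n : ℕ} (f : (Fin n → ℝ) → ℝ) (x : Fin n → ℝ) : ℝ :=
  ∑ i, pd i (fun y => pd i f y) x

section Toolkit

variable {W : Type*} [NormedAddCommGroup W] [NormedSpace ℝ W]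

noncomputable def DD (e : W) (F : W → ℝ) (p : W) : ℝ := fderiv ℝ F p e

theorem one_le_inf : (1 : WithTop ℕ∞) ≤ ((⊤ : ℕ∞) : WithTop ℕ∞) := by exact_mod_cast le_top

theorem inf_add_one : ((⊤ : ℕ∞) : WithTop ℕ∞) + 1 ≤ ((⊤ : ℕ∞) : WithTop ℕ∞) := le_of_eq rfl

theorem ContDiff.dAt {F : W → ℝ} (hF : ContDiff ℝ (⊤ : ℕ∞) F) (p : W) :
    DifferentiableAt ℝ F p := (hF.differentiable (zero_lt_one.trans_le one_le_inf).ne').differentiableAt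

theorem ContDiff.dd {F : W → ℝ} (hF : ContDiff ℝ (⊤ : ℕ∞) F) (e : W) :
    ContDiff ℝ (⊤ : ℕ∞) (DD e F) :=
  (hF.fderiv_right inf_add_one).clm_apply contDiff_const

theorem DD_eq {F : W → ℝ} (hF : ContDiff ℝ (⊤ : ℕ∞) F) (e e' p : W) :
    DD e (DD e' F) p = fderiv ℝ (fderiv ℝ F) p e e' := by
  have hdiff : DifferentiableAt ℝ (fderiv ℝ F) p :=
    ((hF.fderiv_right inf_add_one).differentiable (zero_lt_one.trans_le one_le_inf).ne').differentiableAt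
  have h := fderiv_clm_apply (c := fderiv ℝ F) (u := fun _ => e') hdiff
    (differentiableAt_const e')
  unfold DD
  rw [show (fun q => fderiv ℝ F q e') = (fun q => (fderiv ℝ F q) ((fun _ => e') q)) from rfl, h]
  simp

theorem DD_comm {F : W → ℝ} (hF : ContDiff ℝ (⊤ : ℕ∞) F) (e e' p : W) :
    DD e (DD e' F) p = DD e' (DD e F) p := by
  rw [DD_eq hF, DD_eq hF]
  have h1 : ∀ y, HasFDerivAt F (fderiv ℝ F y) y := fun y => (hF.dAt y).hasFDerivAt
  have h2 : HasFDerivAt (fderiv ℝ F) (fderiv ℝ (fderiv ℝ F) p) p :=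
    (((hF.fderiv_right inf_add_one).differentiable (zero_lt_one.trans_le one_le_inf).ne').differentiableAt).hasFDerivAt
  exact second_derivative_symmetric h1 h2 e e'

end Toolkit

section Slice

variable {n : ℕ}

theorem contDiff_slice {F : ℝ × (Fin n → ℝ) → ℝ} (hF : ContDiff ℝ (⊤ : ℕ∞) F) (t : ℝ) :
    ContDiff ℝ (⊤ : ℕ∞) (fun y => F (t, y)) := hF.comp (contDiff_const.prodMk contDiff_id)

theorem contDiff_tslice {F : ℝ × (Fin n → ℝ) → ℝ} (hF : ContDiff ℝ (⊤ : ℕ∞) F) (x : Fin n → ℝ) :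
    ContDiff ℝ (⊤ : ℕ∞) (fun s => F (s, x)) := hF.comp (contDiff_id.prodMk contDiff_const)

theorem contDiff_pd {f : (Fin n → ℝ) → ℝ} (hf : ContDiff ℝ (⊤ : ℕ∞) f) (i : Fin n) :
    ContDiff ℝ (⊤ : ℕ∞) (fun y => pd i f y) := hf.dd (Pi.single i 1)

theorem pd_slice' {F : ℝ × (Fin n → ℝ) → ℝ} (hF : ContDiff ℝ (⊤ : ℕ∞) F)
    {t : ℝ} {g : (Fin n → ℝ) → ℝ} (hg : ∀ y, g y = F (t, y)) (i : Fin n) (x : Fin n → ℝ) :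
    pd i g x = DD ((0 : ℝ), Pi.single i 1) F (t, x) := by
  have hJ : HasFDerivAt (fun y : Fin n → ℝ => (t, y))
      (((0 : (Fin n → ℝ) →L[ℝ] ℝ)).prod (ContinuousLinearMap.id ℝ _)) x :=
    (hasFDerivAt_const t x).prodMk (hasFDerivAt_id x)
  have hC : HasFDerivAt F (fderiv ℝ F (t, x)) (t, x) := (hF.dAt (t, x)).hasFDerivAt
  have hcomp := hC.comp x hJ
  have hgF : g = fun y => F (t, y) := funext hg
  rw [pd, hgF, (by exact hcomp : HasFDerivAt (fun y => F (t, y)) _ x).fderiv]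
  simp [DD]

theorem pt_slice' {F : ℝ × (Fin n → ℝ) → ℝ} (hF : ContDiff ℝ (⊤ : ℕ∞) F)
    {g : ℝ → (Fin n → ℝ) → ℝ} (hg : ∀ s y, g s y = F (s, y)) (t : ℝ) (x : Fin n → ℝ) :
    pt g t x = DD ((1 : ℝ), (0 : Fin n → ℝ)) F (t, x) := by
  have hJ : HasDerivAt (fun s : ℝ => (s, x)) ((1 : ℝ), (0 : Fin n → ℝ)) t :=
    (hasDerivAt_id t).prodMk (hasDerivAt_const t x)
  have hC : HasFDerivAt F (fderiv ℝ F (t, x)) (t, x) := (hF.dAt (t, x)).hasFDerivAt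
  have hcomp := hC.comp_hasDerivAt t hJ
  have hgF : (fun s => g s x) = fun s => F (s, x) := funext fun s => hg s x
  rw [pt, hgF]
  exact hcomp.deriv

theorem pd_congr {f g : (Fin n → ℝ) → ℝ} (h : ∀ y, f y = g y) (i : Fin n) (x : Fin n → ℝ) :
    pd i f x = pd i g x := by rw [show f = g from funext h]

theorem pt_congr {f g : ℝ → (Fin n → ℝ) → ℝ} (h : ∀ s y, f s y = g s y) (t : ℝ)
    (x : Fin n → ℝ) : pt f t x = pt g t x := by
  rw [show f = g from funext fun s => funext (h s)]

theorem pd_comm {f : (Fin n → ℝ) → ℝ} (hf : ContDiff ℝ (⊤ : ℕ∞) f) (i j : Fin n)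
    (x : Fin n → ℝ) : pd i (fun y => pd j f y) x = pd j (fun y => pd i f y) x :=
  DD_comm hf (Pi.single i 1) (Pi.single j 1) x

theorem pd_add {f g : (Fin n → ℝ) → ℝ} {x : Fin n → ℝ} (hf : DifferentiableAt ℝ f x)
    (hg : DifferentiableAt ℝ g x) (i : Fin n) :
    pd i (fun y => f y + g y) x = pd i f x + pd i g x := by
  unfold pd; rw [fderiv_fun_add hf hg]; simp

theorem pd_neg {f : (Fin n → ℝ) → ℝ} {x : Fin n → ℝ} (i : Fin n) :
    pd i (fun y => -f y) x = -pd i f x := by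
  unfold pd; rw [fderiv_fun_neg]; simp

theorem pd_const_mul {f : (Fin n → ℝ) → ℝ} {x : Fin n → ℝ} (hf : DifferentiableAt ℝ f x)
    (c : ℝ) (i : Fin n) : pd i (fun y => c * f y) x = c * pd i f x := by
  unfold pd; rw [fderiv_const_mul hf]; simp

theorem pd_mul {f g : (Fin n → ℝ) → ℝ} {x : Fin n → ℝ} (hf : DifferentiableAt ℝ f x)
    (hg : DifferentiableAt ℝ g x) (i : Fin n) :
    pd i (fun y => f y * g y) x = pd i f x * g x + f x * pd i g x := by
  unfold pd; rw [fderiv_fun_mul hf hg]; simp; ring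

theorem pd_inv {g : (Fin n → ℝ) → ℝ} {x : Fin n → ℝ}
    (hg : DifferentiableAt ℝ g x) (hgx : g x ≠ 0) (i : Fin n) :
    pd i (fun y => (g y)⁻¹) x = -pd i g x / g x ^ 2 := by
  unfold pd
  rw [show (fun y => (g y)⁻¹) = (fun w : ℝ => w⁻¹) ∘ g from rfl,
    fderiv_comp x (differentiableAt_inv hgx) hg, fderiv_inv]
  simp
  ring

theorem pd_div {f g : (Fin n → ℝ) → ℝ} {x : Fin n → ℝ} (hf : DifferentiableAt ℝ f x)
    (hg : DifferentiableAt ℝ g x) (hgx : g x ≠ 0) (i : Fin n) :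
    pd i (fun y => f y / g y) x = (pd i f x * g x - f x * pd i g x) / g x ^ 2 := by
  have h1 : pd i (fun y => f y * (g y)⁻¹) x
      = pd i f x * (g x)⁻¹ + f x * pd i (fun y => (g y)⁻¹) x :=
    pd_mul hf (hg.inv hgx) i
  rw [show (fun y => f y / g y) = fun y => f y * (g y)⁻¹ from funext fun y => div_eq_mul_inv _ _,
    h1, pd_inv hg hgx i]
  field_simp
  ring

theorem pd_sum {m : ℕ} {f : Fin m → (Fin n → ℝ) → ℝ} {x : Fin n → ℝ}
    (hf : ∀ k, DifferentiableAt ℝ (f k) x) (i : Fin n) :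
    pd i (fun y => ∑ k, f k y) x = ∑ k, pd i (f k) x := by
  unfold pd
  rw [fderiv_fun_sum (fun k _ => hf k)]
  simp

theorem pd_log {f : (Fin n → ℝ) → ℝ} {x : Fin n → ℝ} (hf : DifferentiableAt ℝ f x)
    (hfx : f x ≠ 0) (i : Fin n) :
    pd i (fun y => Real.log (f y)) x = pd i f x / f x := by
  unfold pd
  rw [(hf.hasFDerivAt.log hfx).fderiv]
  simp [div_eq_inv_mul]

theorem pt_add {f g : ℝ → (Fin n → ℝ) → ℝ} {t : ℝ} {x : Fin n → ℝ}
    (hf : DifferentiableAt ℝ (fun s => f s x) t) (hg : DifferentiableAt ℝ (fun s => g s x) t) :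
    pt (fun s y => f s y + g s y) t x = pt f t x + pt g t x := by
  unfold pt; exact deriv_add hf hg

theorem pt_const_mul {f : ℝ → (Fin n → ℝ) → ℝ} {t : ℝ} {x : Fin n → ℝ}
    (hf : DifferentiableAt ℝ (fun s => f s x) t) (c : ℝ) :
    pt (fun s y => c * f s y) t x = c * pt f t x := by
  unfold pt; exact deriv_const_mul c hf

theorem pt_mul {f g : ℝ → (Fin n → ℝ) → ℝ} {t : ℝ} {x : Fin n → ℝ}
    (hf : DifferentiableAt ℝ (fun s => f s x) t) (hg : DifferentiableAt ℝ (fun s => g s x) t) :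
    pt (fun s y => f s y * g s y) t x = pt f t x * g t x + f t x * pt g t x := by
  unfold pt; rw [deriv_fun_mul hf hg]

theorem pt_log {f : ℝ → (Fin n → ℝ) → ℝ} {t : ℝ} {x : Fin n → ℝ}
    (hf : DifferentiableAt ℝ (fun s => f s x) t) (hfx : f t x ≠ 0) :
    pt (fun s y => Real.log (f s y)) t x = pt f t x / f t x := by
  unfold pt
  exact (hf.hasDerivAt.log hfx).deriv

end Slice

theorem stmt_19 (N : ℕ) (T μ a : ℝ) (hμ : 0 < μ) (hT : 0 < T)
    (ρ : ℝ → (Fin N → ℝ) → ℝ) (u : ℝ → (Fin N → ℝ) → Fin N → ℝ)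
    (hρ : ContDiff ℝ (⊤ : ℕ∞) (fun p : ℝ × (Fin N → ℝ) => ρ p.1 p.2))
    (hu : ∀ j : Fin N, ContDiff ℝ (⊤ : ℕ∞) (fun p : ℝ × (Fin N → ℝ) => u p.1 p.2 j))
    (hpos : ∀ t y, 0 < ρ t y)
    -- conservation of mass
    (hmass : ∀ t ∈ Set.Ioo 0 T, ∀ x : Fin N → ℝ,
      pt ρ t x + ∑ i, pd i (fun y => ρ t y * u t y i) x = 0)
    -- conservation of momentum with shallow-water viscosity and quantum capillarity κ = μ²
    (hmom : ∀ t ∈ Set.Ioo 0 T, ∀ x : Fin N → ℝ, ∀ j : Fin N,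
      pt (fun s y => ρ s y * u s y j) t x
        + ∑ i, pd i (fun y => ρ t y * u t y i * u t y j) x
        - 2 * μ * ∑ i, pd i (fun y =>
            ρ t y * ((pd i (fun z => u t z j) y + pd j (fun z => u t z i) y) / 2)) x
        + a * pd j (fun y => ρ t y) x
      = μ ^ 2 * ∑ i, pd i (fun y =>
          ρ t y * pd i (fun z => pd j (fun w => Real.log (ρ t w)) z) y) x) :
    -- the effective velocity v = u + μ ∇ log ρ satisfies the parabolic system
    ∀ t ∈ Set.Ioo 0 T, ∀ x : Fin N → ℝ,
      (pt ρ t x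
          + (∑ i, pd i (fun y =>
              ρ t y * (u t y i + μ * pd i (fun z => Real.log (ρ t z)) y)) x)
          - μ * lap (fun y => ρ t y) x = 0) ∧
      ∀ j : Fin N,
        ρ t x * pt (fun s y => u s y j + μ * pd j (fun z => Real.log (ρ s z)) y) t x
          + ρ t x * ∑ i, u t x i * pd i (fun y =>
              u t y j + μ * pd j (fun z => Real.log (ρ t z)) y) x
          - μ * ∑ i, pd i (fun y =>
              ρ t y * pd i (fun z =>
                u t z j + μ * pd j (fun w => Real.log (ρ t w)) z) y) x
          + a * pd j (fun y => ρ t y) x = 0 := by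
  intro t ht x
  have hρ' : ContDiff ℝ ((⊤ : ℕ∞)) (fun p : ℝ × (Fin N → ℝ) => ρ p.1 p.2) := hρ.of_le (by simp)
  have hu' : ∀ k, ContDiff ℝ ((⊤ : ℕ∞)) (fun p : ℝ × (Fin N → ℝ) => u p.1 p.2 k) :=
    fun k => (hu k).of_le (by simp)
  have hR : ContDiff ℝ ((⊤ : ℕ∞)) (fun y => ρ t y) := contDiff_slice hρ' t
  have hUk : ∀ k, ContDiff ℝ ((⊤ : ℕ∞)) (fun y => u t y k) := fun k => contDiff_slice (hu' k) t
  have hne : ∀ y, ρ t y ≠ 0 := fun y => (hpos t y).ne'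
  constructor
  · -- Part 1: the mass equation for the effective velocity
    have p1 : ∀ i : Fin N, pd i (fun y => ρ t y * (u t y i + μ * pd i (fun z => Real.log (ρ t z)) y)) x
        = pd i (fun y => ρ t y * u t y i) x + μ * pd i (fun y => pd i (fun z => ρ t z) y) x := by
      intro i
      have e : ∀ y, ρ t y * (u t y i + μ * pd i (fun z => Real.log (ρ t z)) y)
          = ρ t y * u t y i + μ * pd i (fun z => ρ t z) y := by
        intro y
        rw [pd_log (hR.dAt y) (hne y) i]
        field_simp [hne y]
      rw [pd_congr e i x]
      rw [pd_add ((hR.mul (hUk i)).dAt x) ((contDiff_const.mul (contDiff_pd hR i)).dAt x) i]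
      rw [pd_const_mul ((contDiff_pd hR i).dAt x) μ i]
    have hsum : ∑ i, pd i (fun y => ρ t y * (u t y i + μ * pd i (fun z => Real.log (ρ t z)) y)) x
        = (∑ i, pd i (fun y => ρ t y * u t y i) x)
          + μ * ∑ i, pd i (fun y => pd i (fun z => ρ t z) y) x := by
      rw [Finset.mul_sum, ← Finset.sum_add_distrib]
      exact Finset.sum_congr rfl fun i _ => p1 i
    have hlap : lap (fun y => ρ t y) x = ∑ i, pd i (fun y => pd i (fun z => ρ t z) y) x := rfl
    have hm := hmass t ht x
    rw [hsum, hlap]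
    linarith
  · -- Part 2: the momentum equation for the effective velocity
    intro j

    have hΛ : ContDiff ℝ ((⊤ : ℕ∞)) (fun p : ℝ × (Fin N → ℝ) => Real.log (ρ p.1 p.2)) :=
      hρ'.log (fun p => (hpos p.1 p.2).ne')
    have hLt : ContDiff ℝ ((⊤ : ℕ∞)) (fun y => Real.log (ρ t y)) := hR.log hne
    have hljC : ContDiff ℝ ((⊤ : ℕ∞)) (fun y => pd j (fun z => Real.log (ρ t z)) y) :=
      contDiff_pd hLt j
    -- time derivative of the effective velocity component
    have hV1 : pt (fun s y => u s y j + μ * pd j (fun z => Real.log (ρ s z)) y) t x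
        = pt (fun s y => u s y j
            + μ * DD ((0 : ℝ), Pi.single j 1) (fun p : ℝ × (Fin N → ℝ) => Real.log (ρ p.1 p.2)) (s, y)) t x := by
      refine pt_congr (fun s y => ?_) t x
      rw [pd_slice' (t := s) hΛ (fun z => rfl) j y]
    have hdU : DifferentiableAt ℝ (fun s => u s x j) t := (contDiff_tslice (hu' j) x).dAt t
    have hdD : DifferentiableAt ℝ
        (fun s => DD ((0 : ℝ), Pi.single j 1) (fun p : ℝ × (Fin N → ℝ) => Real.log (ρ p.1 p.2)) (s, x)) t :=
      (contDiff_tslice (hΛ.dd _) x).dAt t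
    have hdD2 : DifferentiableAt ℝ
        (fun s => μ * DD ((0 : ℝ), Pi.single j 1) (fun p : ℝ × (Fin N → ℝ) => Real.log (ρ p.1 p.2)) (s, x)) t :=
      (contDiff_const.mul (contDiff_tslice (hΛ.dd _) x)).dAt t
    have hadd : pt (fun s y => u s y j
          + μ * DD ((0 : ℝ), Pi.single j 1) (fun p : ℝ × (Fin N → ℝ) => Real.log (ρ p.1 p.2)) (s, y)) t x
        = pt (fun s y => u s y j) t x
          + pt (fun s y => μ * DD ((0 : ℝ), Pi.single j 1) (fun p : ℝ × (Fin N → ℝ) => Real.log (ρ p.1 p.2)) (s, y)) t x := pt_add hdU hdD2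
    have hcm : pt (fun s y => μ * DD ((0 : ℝ), Pi.single j 1) (fun p : ℝ × (Fin N → ℝ) => Real.log (ρ p.1 p.2)) (s, y)) t x
        = μ * pt (fun s y => DD ((0 : ℝ), Pi.single j 1) (fun p : ℝ × (Fin N → ℝ) => Real.log (ρ p.1 p.2)) (s, y)) t x := pt_const_mul hdD μ
    have hsl : pt (fun s y => DD ((0 : ℝ), Pi.single j 1) (fun p : ℝ × (Fin N → ℝ) => Real.log (ρ p.1 p.2)) (s, y)) t x
        = DD ((1 : ℝ), (0 : Fin N → ℝ)) (DD ((0 : ℝ), Pi.single j 1) (fun p : ℝ × (Fin N → ℝ) => Real.log (ρ p.1 p.2))) (t, x) :=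
      pt_slice' (hΛ.dd _) (fun s y => rfl) t x
    have hcm2 : DD ((1 : ℝ), (0 : Fin N → ℝ)) (DD ((0 : ℝ), Pi.single j 1) (fun p : ℝ × (Fin N → ℝ) => Real.log (ρ p.1 p.2))) (t, x)
        = DD ((0 : ℝ), Pi.single j 1) (DD ((1 : ℝ), (0 : Fin N → ℝ)) (fun p : ℝ × (Fin N → ℝ) => Real.log (ρ p.1 p.2))) (t, x) := DD_comm hΛ _ _ _
    have g1 : pt (fun s y => u s y j + μ * pd j (fun z => Real.log (ρ s z)) y) t x
        = pt (fun s y => u s y j) t x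
          + μ * DD ((0 : ℝ), Pi.single j 1) (DD ((1 : ℝ), (0 : Fin N → ℝ)) (fun p : ℝ × (Fin N → ℝ) => Real.log (ρ p.1 p.2))) (t, x) := by
      rw [hV1, hadd, hcm, hsl, hcm2]
    have g2 : pt (fun s y => ρ s y * u s y j) t x
        = pt ρ t x * u t x j + ρ t x * pt (fun s y => u s y j) t x :=
      pt_mul ((contDiff_tslice hρ' x).dAt t) ((contDiff_tslice (hu' j) x).dAt t)
    have g3 := hmass t ht x
    have g4 : ∑ i, pd i (fun y => ρ t y * u t y i) x
        = (∑ i, pd i (fun y => ρ t y) x * u t x i) + ρ t x * ∑ i, pd i (fun y => u t y i) x := by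
      rw [Finset.mul_sum, ← Finset.sum_add_distrib]
      exact Finset.sum_congr rfl fun i _ => pd_mul (hR.dAt x) ((hUk i).dAt x) i
    have g5 := hmom t ht x j
    have g6 : ∑ i, pd i (fun y => ρ t y * u t y i * u t y j) x
        = u t x j * (∑ i, pd i (fun y => ρ t y) x * u t x i)
          + (ρ t x * u t x j) * (∑ i, pd i (fun y => u t y i) x)
          + ρ t x * (∑ i, u t x i * pd i (fun y => u t y j) x) := by
      rw [Finset.mul_sum, Finset.mul_sum, Finset.mul_sum, ← Finset.sum_add_distrib,
        ← Finset.sum_add_distrib]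
      refine Finset.sum_congr rfl fun i _ => ?_
      rw [pd_mul ((hR.mul (hUk i)).dAt x) ((hUk j).dAt x) i,
        pd_mul (hR.dAt x) ((hUk i).dAt x) i]
      ring
    have g7 : ∑ i, pd i (fun y =>
          ρ t y * ((pd i (fun z => u t z j) y + pd j (fun z => u t z i) y) / 2)) x
        = (1/2) * (∑ i, pd i (fun y => ρ t y) x * pd i (fun y => u t y j) x)
          + (ρ t x / 2) * (∑ i, pd i (fun y => pd i (fun z => u t z j) y) x)
          + (1/2) * (∑ i, pd i (fun y => ρ t y) x * pd j (fun y => u t y i) x)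
          + (ρ t x / 2) * (∑ i, pd j (fun y => pd i (fun z => u t z i) y) x) := by
      rw [Finset.mul_sum, Finset.mul_sum, Finset.mul_sum, Finset.mul_sum,
        ← Finset.sum_add_distrib, ← Finset.sum_add_distrib, ← Finset.sum_add_distrib]
      refine Finset.sum_congr rfl fun i _ => ?_
      have e : ∀ y, ρ t y * ((pd i (fun z => u t z j) y + pd j (fun z => u t z i) y) / 2)
          = (1/2) * (ρ t y * pd i (fun z => u t z j) y + ρ t y * pd j (fun z => u t z i) y) :=
        fun y => by ring
      rw [pd_congr e i x,
        pd_const_mul (((hR.mul (contDiff_pd (hUk j) i)).add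
          (hR.mul (contDiff_pd (hUk i) j))).dAt x) (1/2) i,
        pd_add ((hR.mul (contDiff_pd (hUk j) i)).dAt x)
          ((hR.mul (contDiff_pd (hUk i) j)).dAt x) i,
        pd_mul (hR.dAt x) ((contDiff_pd (hUk j) i).dAt x) i,
        pd_mul (hR.dAt x) ((contDiff_pd (hUk i) j).dAt x) i,
        pd_comm (hUk i) i j x]
      ring
    -- the key identity for the second time-space derivative of log ρ
    have hnumC : ContDiff ℝ ((⊤ : ℕ∞)) (fun y => -(∑ i, pd i (fun z => ρ t z * u t z i) y)) :=
      (ContDiff.sum fun i _ => contDiff_pd (hR.mul (hUk i)) i).neg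
    have eΛ : ∀ y, DD ((1 : ℝ), (0 : Fin N → ℝ)) (fun p : ℝ × (Fin N → ℝ) => Real.log (ρ p.1 p.2)) (t, y)
        = -(∑ i, pd i (fun z => ρ t z * u t z i) y) / ρ t y := by
      intro y
      have h1 : pt (fun s z => Real.log (ρ s z)) t y
          = DD ((1 : ℝ), (0 : Fin N → ℝ)) (fun p : ℝ × (Fin N → ℝ) => Real.log (ρ p.1 p.2)) (t, y) := pt_slice' hΛ (fun s z => rfl) t y
      have h2 : pt (fun s z => Real.log (ρ s z)) t y = pt ρ t y / ρ t y :=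
        pt_log ((contDiff_tslice hρ' y).dAt t) (hne y)
      have h3 : pt ρ t y = -(∑ i, pd i (fun z => ρ t z * u t z i) y) := by
        have := hmass t ht y
        linarith
      rw [← h1, h2, h3]
    have hP1 : DD ((0 : ℝ), Pi.single j 1) (DD ((1 : ℝ), (0 : Fin N → ℝ)) (fun p : ℝ × (Fin N → ℝ) => Real.log (ρ p.1 p.2))) (t, x)
        = pd j (fun y => -(∑ i, pd i (fun z => ρ t z * u t z i) y) / ρ t y) x := by
      have h4 : pd j (fun y => DD ((1 : ℝ), (0 : Fin N → ℝ)) (fun p : ℝ × (Fin N → ℝ) => Real.log (ρ p.1 p.2)) (t, y)) x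
          = DD ((0 : ℝ), Pi.single j 1) (DD ((1 : ℝ), (0 : Fin N → ℝ)) (fun p : ℝ × (Fin N → ℝ) => Real.log (ρ p.1 p.2))) (t, x) :=
        pd_slice' (hΛ.dd _) (fun y => rfl) j x
      rw [← h4]
      exact pd_congr (fun y => eΛ y) j x
    have hP2 : pd j (fun y => -(∑ i, pd i (fun z => ρ t z * u t z i) y) / ρ t y) x
        = (pd j (fun y => -(∑ i, pd i (fun z => ρ t z * u t z i) y)) x * ρ t x
            - -(∑ i, pd i (fun z => ρ t z * u t z i) x) * pd j (fun y => ρ t y) x) / ρ t x ^ 2 :=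
      pd_div (hnumC.dAt x) (hR.dAt x) (hne x) j
    have hP3 : pd j (fun y => -(∑ i, pd i (fun z => ρ t z * u t z i) y)) x
        = -(∑ i, pd j (fun y => pd i (fun z => ρ t z * u t z i) y) x) := by
      have h := pd_neg (f := fun y => ∑ i, pd i (fun z => ρ t z * u t z i) y) (x := x) j
      rw [h, pd_sum (fun k => (contDiff_pd (hR.mul (hUk k)) k).dAt x) j]
    have hP4 : ∑ i, pd j (fun y => pd i (fun z => ρ t z * u t z i) y) x
        = (∑ i, pd i (fun y => pd j (fun z => ρ t z) y) x * u t x i)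
          + (∑ i, pd i (fun y => ρ t y) x * pd j (fun y => u t y i) x)
          + pd j (fun y => ρ t y) x * (∑ i, pd i (fun y => u t y i) x)
          + ρ t x * (∑ i, pd j (fun y => pd i (fun z => u t z i) y) x) := by
      rw [Finset.mul_sum, Finset.mul_sum, ← Finset.sum_add_distrib, ← Finset.sum_add_distrib,
        ← Finset.sum_add_distrib]
      refine Finset.sum_congr rfl fun i _ => ?_
      have ha : ∀ y, pd i (fun z => ρ t z * u t z i) y
          = pd i (fun z => ρ t z) y * u t y i + ρ t y * pd i (fun z => u t z i) y :=
        fun y => pd_mul (hR.dAt y) ((hUk i).dAt y) i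
      rw [pd_congr ha j x,
        pd_add (((contDiff_pd hR i).mul (hUk i)).dAt x)
          ((hR.mul (contDiff_pd (hUk i) i)).dAt x) j,
        pd_mul ((contDiff_pd hR i).dAt x) ((hUk i).dAt x) j,
        pd_mul (hR.dAt x) ((contDiff_pd (hUk i) i).dAt x) j,
        pd_comm hR j i x]
      ring
    have g8 : DD ((0 : ℝ), Pi.single j 1) (DD ((1 : ℝ), (0 : Fin N → ℝ)) (fun p : ℝ × (Fin N → ℝ) => Real.log (ρ p.1 p.2))) (t, x) * ρ t x ^ 2
        = (-((∑ i, pd i (fun y => pd j (fun z => ρ t z) y) x * u t x i)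
              + (∑ i, pd i (fun y => ρ t y) x * pd j (fun y => u t y i) x)
              + pd j (fun y => ρ t y) x * (∑ i, pd i (fun y => u t y i) x)
              + ρ t x * (∑ i, pd j (fun y => pd i (fun z => u t z i) y) x))) * ρ t x
          - (-((∑ i, pd i (fun y => ρ t y) x * u t x i)
              + ρ t x * ∑ i, pd i (fun y => u t y i) x)) * pd j (fun y => ρ t y) x := by
      rw [hP1, hP2, div_mul_cancel₀ _ (pow_ne_zero 2 (hne x)), hP3, hP4, g4]
    -- Hessian of log ρ in terms of derivatives of ρ
    have hBi : ∀ i : Fin N, pd i (fun z => pd j (fun w => Real.log (ρ t w)) z) x * ρ t x ^ 2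
        = pd i (fun y => pd j (fun z => ρ t z) y) x * ρ t x
          - pd j (fun y => ρ t y) x * pd i (fun y => ρ t y) x := by
      intro i
      have e : ∀ y, pd j (fun w => Real.log (ρ t w)) y = pd j (fun z => ρ t z) y / ρ t y :=
        fun y => pd_log (hR.dAt y) (hne y) j
      rw [pd_congr e i x,
        pd_div ((contDiff_pd hR j).dAt x) (hR.dAt x) (hne x) i,
        div_mul_cancel₀ _ (pow_ne_zero 2 (hne x))]
    have g9 : (∑ i, u t x i * pd i (fun z => pd j (fun w => Real.log (ρ t w)) z) x) * ρ t x ^ 2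
        = ρ t x * (∑ i, pd i (fun y => pd j (fun z => ρ t z) y) x * u t x i)
          - pd j (fun y => ρ t y) x * (∑ i, pd i (fun y => ρ t y) x * u t x i) := by
      rw [Finset.sum_mul, Finset.mul_sum, Finset.mul_sum, ← Finset.sum_sub_distrib]
      refine Finset.sum_congr rfl fun i _ => ?_
      calc u t x i * pd i (fun z => pd j (fun w => Real.log (ρ t w)) z) x * ρ t x ^ 2
          = u t x i * (pd i (fun z => pd j (fun w => Real.log (ρ t w)) z) x * ρ t x ^ 2) := by ring
        _ = u t x i * (pd i (fun y => pd j (fun z => ρ t z) y) x * ρ t x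
              - pd j (fun y => ρ t y) x * pd i (fun y => ρ t y) x) := by rw [hBi i]
        _ = ρ t x * (pd i (fun y => pd j (fun z => ρ t z) y) x * u t x i)
              - pd j (fun y => ρ t y) x * (pd i (fun y => ρ t y) x * u t x i) := by ring
    -- the two sums appearing in the goal
    have hT2 : ∀ i : Fin N, pd i (fun y => u t y j + μ * pd j (fun z => Real.log (ρ t z)) y) x
        = pd i (fun y => u t y j) x
          + μ * pd i (fun z => pd j (fun w => Real.log (ρ t w)) z) x := by
      intro i
      rw [pd_add ((hUk j).dAt x) ((contDiff_const.mul hljC).dAt x) i,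
        pd_const_mul (hljC.dAt x) μ i]
    have g10 : ∑ i, u t x i * pd i (fun y => u t y j + μ * pd j (fun z => Real.log (ρ t z)) y) x
        = (∑ i, u t x i * pd i (fun y => u t y j) x)
          + μ * (∑ i, u t x i * pd i (fun z => pd j (fun w => Real.log (ρ t w)) z) x) := by
      rw [Finset.mul_sum, ← Finset.sum_add_distrib]
      refine Finset.sum_congr rfl fun i _ => ?_
      rw [hT2 i]
      ring
    have g11 : ∑ i, pd i (fun y =>
          ρ t y * pd i (fun z => u t z j + μ * pd j (fun w => Real.log (ρ t w)) z) y) x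
        = (∑ i, pd i (fun y => ρ t y) x * pd i (fun y => u t y j) x)
          + ρ t x * (∑ i, pd i (fun y => pd i (fun z => u t z j) y) x)
          + μ * (∑ i, pd i (fun y =>
              ρ t y * pd i (fun z => pd j (fun w => Real.log (ρ t w)) z) y) x) := by
      rw [Finset.mul_sum, Finset.mul_sum, ← Finset.sum_add_distrib, ← Finset.sum_add_distrib]
      refine Finset.sum_congr rfl fun i _ => ?_
      have e : ∀ y, ρ t y * pd i (fun z => u t z j + μ * pd j (fun w => Real.log (ρ t w)) z) y
          = ρ t y * pd i (fun z => u t z j) y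
            + μ * (ρ t y * pd i (fun z => pd j (fun w => Real.log (ρ t w)) z) y) := by
        intro y
        rw [pd_add ((hUk j).dAt y) ((contDiff_const.mul hljC).dAt y) i,
          pd_const_mul (hljC.dAt y) μ i]
        ring
      rw [pd_congr e i x,
        pd_add ((hR.mul (contDiff_pd (hUk j) i)).dAt x)
          ((contDiff_const.mul (hR.mul (contDiff_pd hljC i))).dAt x) i,
        pd_const_mul ((hR.mul (contDiff_pd hljC i)).dAt x) μ i,
        pd_mul (hR.dAt x) ((contDiff_pd (hUk j) i).dAt x) i]
    refine mul_left_cancel₀ (pow_ne_zero 2 (hne x)) ?_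
    rw [mul_zero]
    linear_combination (ρ t x)^2 * g5 - (ρ t x)^2 * u t x j * g3 + μ * (ρ t x) * g8
      + μ * (ρ t x) * g9 + (ρ t x)^3 * g1 - (ρ t x)^2 * g2 + (ρ t x)^2 * u t x j * g4
      - (ρ t x)^2 * g6 + 2 * μ * (ρ t x)^2 * g7 + (ρ t x)^3 * g10 - μ * (ρ t x)^2 * g11
end
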